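/- Let λ ⊢ n, μ ⊢ n be partitions with λ obtained from μ by moving exactly one box (i.e., |λ \ μ| = 1). If V^λ ⊗ V^μ appears in the hook component M^{⊗n}(t) of (ℂ^{k×m})^{⊗n}, then t ≥ 1; more generally, if V^λ ⊗ V^μ appears in M^{⊗n}(t) then d(λ,μ) ≤ t, where the multiplicity of V^λ ⊗ V^μ in M^{⊗n}(t) is C(n−1,t)·Σ_{i=0}^{t} (−1)^{t−i} σ_{λ,μ}(i) with σ_{λ,μ}(i) = Σ_{α⊢n−i, β⊢i} c^λ_{αβ} c^μ_{αβ'}. Concretely: if C(n−1,t)·Σ_{i=0}^{t} (−1)^{t−i} σ_{λ,μ}(i) ≠ 0, then |λ \ μ| ≤ t. -/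

import Mathlib

open Finset

/-- The Young diagram of a partition `p ⊢ m`. -/
def Nat.Partition.toYD {m : ℕ} (p : Nat.Partition m) : YoungDiagram :=
  YoungDiagram.ofRowLens (p.parts.sort (· ≥ ·)) (p.parts.pairwise_sort _).sortedGE

/-- `d` precedes `c` (weakly) in the reverse reading order (right-to-left along rows,
top row to bottom row). -/
def ReadingPrefix (d c : ℕ × ℕ) : Prop :=
  d.1 < c.1 ∨ (d.1 = c.1 ∧ c.2 ≤ d.2)

/-- A Littlewood–Richardson filling of the skew shape `lam/alp` with content `bet`:
rows weakly increase, columns strictly increase, entry `k` occurs `bet_k` times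
(entries are 0-indexed), and the reverse reading word is a lattice (ballot) word. -/
def IsLRFilling (lam alp bet : YoungDiagram)
    (f : {c // c ∈ lam.cells \ alp.cells} → ℕ) : Prop :=
  (∀ c d : {c // c ∈ lam.cells \ alp.cells},
    (c : ℕ × ℕ).1 = (d : ℕ × ℕ).1 → (c : ℕ × ℕ).2 < (d : ℕ × ℕ).2 → f c ≤ f d) ∧
  (∀ c d : {c // c ∈ lam.cells \ alp.cells},
    (c : ℕ × ℕ).2 = (d : ℕ × ℕ).2 → (c : ℕ × ℕ).1 < (d : ℕ × ℕ).1 → f c < f d) ∧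
  (∀ k : ℕ, Nat.card {c : {c // c ∈ lam.cells \ alp.cells} // f c = k} = bet.rowLen k) ∧
  (∀ c : {c // c ∈ lam.cells \ alp.cells}, ∀ e : ℕ,
    Nat.card {d : {c // c ∈ lam.cells \ alp.cells} //
        ReadingPrefix (d : ℕ × ℕ) (c : ℕ × ℕ) ∧ f d = e + 1} ≤
      Nat.card {d : {c // c ∈ lam.cells \ alp.cells} //
        ReadingPrefix (d : ℕ × ℕ) (c : ℕ × ℕ) ∧ f d = e})

/-- The Littlewood–Richardson coefficient `c^λ_{αβ}`: the number of
Littlewood–Richardson fillings of the skew shape `λ/α` with content `β`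
(and `0` unless `α ⊆ λ`). -/
noncomputable def lrCoeff (lam alp bet : YoungDiagram) : ℕ :=
  if alp.cells ⊆ lam.cells then
    Nat.card {f : {c // c ∈ lam.cells \ alp.cells} → ℕ // IsLRFilling lam alp bet f}
  else 0

/-- `σ_{λ,μ}(i) = Σ_{α ⊢ n-i, β ⊢ i} c^λ_{αβ}·c^μ_{αβ'}`. -/
noncomputable def sigmaLM (lam mu : YoungDiagram) (n i : ℕ) : ℕ :=
  ∑ a : Nat.Partition (n - i), ∑ b : Nat.Partition i,
    lrCoeff lam a.toYD b.toYD * lrCoeff mu a.toYD b.toYD.transpose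


lemma card_ofRowLens (w : List ℕ) (hw : w.SortedGE) :
    (YoungDiagram.ofRowLens w hw).card = w.sum := by
  have hcells : (YoungDiagram.ofRowLens w hw).cells =
      Finset.univ.biUnion (fun i : Fin w.length => {(i : ℕ)} ×ˢ Finset.range w[i]) := by
    ext ⟨a, b⟩
    simp only [YoungDiagram.mem_cells, YoungDiagram.mem_ofRowLens, Finset.mem_biUnion,
      Finset.mem_univ, true_and, Finset.mem_product, Finset.mem_singleton, Finset.mem_range]
    constructor
    · rintro ⟨h, h2⟩; exact ⟨⟨a, h⟩, rfl, h2⟩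
    · rintro ⟨i, rfl, h2⟩; exact ⟨i.2, h2⟩
  rw [YoungDiagram.card, hcells, Finset.card_biUnion]
  · have : ∀ i : Fin w.length, ({(i : ℕ)} ×ˢ Finset.range w[i]).card = w.get i := by
      intro i; simp
    rw [Finset.sum_congr rfl fun i _ => this i, Fin.sum_univ_def, List.map_get_finRange]
  · intro i _ j _ hij
    simp only [Finset.disjoint_left, Finset.mem_product, Finset.mem_singleton]
    rintro ⟨a, b⟩ ⟨rfl, -⟩ ⟨h, -⟩
    exact hij (Fin.ext h)

lemma toYD_card {m : ℕ} (p : Nat.Partition m) : p.toYD.card = m := by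
  rw [Nat.Partition.toYD, card_ofRowLens]
  have h := congrArg Multiset.sum (Multiset.sort_eq p.parts (· ≥ ·))
  rw [Multiset.sum_coe] at h
  rw [h, p.parts_sum]

lemma subset_of_lrCoeff_ne_zero {lam alp bet : YoungDiagram}
    (h : lrCoeff lam alp bet ≠ 0) : alp.cells ⊆ lam.cells := by
  by_contra hc
  exact h (by simp [lrCoeff, hc])

/-- Let `λ, μ ⊢ n` and `0 ≤ t ≤ n-1`.  The multiplicity of `V^λ ⊗ V^μ` in the hook
component `M^{⊗n}(t)` of `(ℂ^{k×m})^{⊗n}` is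
`C(n-1,t)·Σ_{i=0}^{t} (-1)^{t-i} σ_{λ,μ}(i)`; if this is nonzero then
`d(λ,μ) = |λ \ μ| ≤ t`. -/
theorem hook_component_distance_bound (n t : ℕ) (lam mu : YoungDiagram)
    (hlam : lam.card = n) (hmu : mu.card = n) (ht : t ≤ n - 1)
    (h : (Nat.choose (n - 1) t : ℤ) *
        ∑ i ∈ Finset.range (t + 1), (-1 : ℤ) ^ (t - i) * (sigmaLM lam mu n i : ℤ) ≠ 0) :
    (lam.cells \ mu.cells).card ≤ t := by
  have hsum : ∑ i ∈ Finset.range (t + 1), (-1 : ℤ) ^ (t - i) * (sigmaLM lam mu n i : ℤ) ≠ 0 :=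
    (mul_ne_zero_iff.mp h).2
  obtain ⟨i, hi, hterm⟩ := Finset.exists_ne_zero_of_sum_ne_zero hsum
  have hit : i ≤ t := by simpa [Nat.lt_succ_iff] using Finset.mem_range.mp hi
  have hsig : sigmaLM lam mu n i ≠ 0 := by
    intro h0
    exact hterm (by simp [h0])
  rw [sigmaLM] at hsig
  have hsig' : ∃ a : Nat.Partition (n - i), ∃ b : Nat.Partition i,
      lrCoeff lam a.toYD b.toYD * lrCoeff mu a.toYD b.toYD.transpose ≠ 0 := by
    by_contra hc
    push_neg at hc
    exact hsig (Finset.sum_eq_zero fun a _ => Finset.sum_eq_zero fun b _ => hc a b)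
  obtain ⟨a, b, hab⟩ := hsig'
  have h1 : a.toYD.cells ⊆ lam.cells :=
    subset_of_lrCoeff_ne_zero (left_ne_zero_of_mul hab)
  have h2 : a.toYD.cells ⊆ mu.cells :=
    subset_of_lrCoeff_ne_zero (right_ne_zero_of_mul hab)
  have hcard : a.toYD.card = n - i := toYD_card a
  calc (lam.cells \ mu.cells).card ≤ (lam.cells \ a.toYD.cells).card :=
        Finset.card_le_card (Finset.sdiff_subset_sdiff (le_refl _) h2)
    _ = lam.card - a.toYD.card := Finset.card_sdiff_of_subset h1
    _ ≤ t := by rw [hlam, hcard]; omega
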